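/- Lower bound for state conversion with standard oracles: let q, n ∈ ℕ, D ⊆ {1,…,q}^n a finite set, X = ℂ^{q+1} with orthonormal basis e₀, e₁, …, e_q, and Z a finite-dimensional complex inner product space. For each x ∈ D and j ∈ {1,…,n}, let O_{x,j} be a unitary on X with O_{x,j} e₀ = e_{x_j}, and assume that O_{x,j} depends only on x_j (that is, x_j = y_j implies O_{x,j} = O_{y,j}). Let O_x = ⊕_{j=1}^n O_{x,j} be the block-diagonal unitary on ℂ^n ⊗ X, and let ρ_x, σ_x be unit vectors in Z. Then γ₂((⟨ρ_x,ρ_y⟩ − ⟨σ_x,σ_y⟩)_{x,y∈D} | (O_x − O_y)_{x,y∈D}) ≥ (1/2) · γ₂((⟨ρ_x,ρ_y⟩ − ⟨σ_x,σ_y⟩)_{x,y∈D} | (D_{xy})_{x,y∈D}), where D_{xy} is the n × n diagonal matrix (a linear map ℂ^n → ℂ^n) whose j-th diagonal entry is 1 if x_j ≠ y_j and 0 if x_j = y_j. -/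

import Mathlib

/-!
Write each block of `O_x − O_y` as `O_{x,j} − O_{y,j} = (O_{x,j}^*)^* ∘ id + id^* ∘ (−O_{y,j})`.
Since `O_{x,j} = O_{y,j}` whenever `x_j = y_j`, this reads `O_x − O_y = L_x^* (D_{xy} ⊗ I) R_y`,
where `L_x = (O_{x,j}^*, id)_j` and `R_y = (id, −O_{y,j})_j` are stacks of two isometries, so
`‖L_x‖², ‖R_y‖² ≤ 2`. Composing a factorization of `A` relative to `O_x − O_y` with `L_x` and `R_y`
gives one relative to `D_{xy}` at twice the cost.
-/

noncomputable section

open scoped ENNReal ComplexOrder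

/-- A linear endomorphism of a finite-dimensional complex inner product space is unitary. -/
def IsUnitaryMap {E : Type*} [NormedAddCommGroup E] [InnerProductSpace ℂ E]
    [FiniteDimensional ℂ E] (f : E →ₗ[ℂ] E) : Prop :=
  LinearMap.adjoint f ∘ₗ f = LinearMap.id ∧ f ∘ₗ LinearMap.adjoint f = LinearMap.id

/-- Operator norm of a linear map between finite-dimensional inner product spaces. -/
noncomputable def opNorm {E F : Type*} [NormedAddCommGroup E] [InnerProductSpace ℂ E]
    [NormedAddCommGroup F] [InnerProductSpace ℂ F] [FiniteDimensional ℂ E]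
    (f : E →ₗ[ℂ] F) : ℝ :=
  ‖LinearMap.toContinuousLinearMap f‖

/-- A complex scalar viewed as a linear map `ℂ → ℂ`. -/
noncomputable def scalarMap (c : ℂ) : ℂ →ₗ[ℂ] ℂ := c • LinearMap.id

/-- The block-diagonal map `⊕ᵢ Δᵢ` on an `ℓ²`-direct sum of copies of a space. -/
noncomputable def piBlock {ι : Type*} [Fintype ι] {X₁ X₂ : Type*}
    [NormedAddCommGroup X₁] [InnerProductSpace ℂ X₁]
    [NormedAddCommGroup X₂] [InnerProductSpace ℂ X₂]
    (Δ : ι → (X₂ →ₗ[ℂ] X₁)) :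
    PiLp 2 (fun _ : ι => X₂) →ₗ[ℂ] PiLp 2 (fun _ : ι => X₁) :=
  (WithLp.linearEquiv 2 ℂ (∀ _ : ι, X₁)).symm.toLinearMap ∘ₗ
    (LinearMap.pi fun i => Δ i ∘ₗ LinearMap.proj i) ∘ₗ
      (WithLp.linearEquiv 2 ℂ (∀ _ : ι, X₂)).toLinearMap

/-- The relative `γ₂`-norm `γ₂(A | Δ)` of a family `A = (A_{xy} : Z₂ → Z₁)` relative to a
family `Δ = (Δ_{xy} : X₂ → X₁)`: the infimum over `k ∈ ℕ` and factorizations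
`A_{xy} = Υ_x* ∘ (Δ_{xy} ⊗ id_{ℂᵏ}) ∘ Φ_y` of `max (max_x ‖Υ_x‖²) (max_y ‖Φ_y‖²)`,
where `X ⊗ ℂᵏ` is realized as the `ℓ²`-direct sum of `k` copies of `X`.
The infimum of the empty set is `+∞`. -/
noncomputable def relGamma2 {D₁ D₂ : Type*} [Fintype D₁] [Fintype D₂]
    {X₁ X₂ Z₁ Z₂ : Type*}
    [NormedAddCommGroup X₁] [InnerProductSpace ℂ X₁] [FiniteDimensional ℂ X₁]
    [NormedAddCommGroup X₂] [InnerProductSpace ℂ X₂] [FiniteDimensional ℂ X₂]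
    [NormedAddCommGroup Z₁] [InnerProductSpace ℂ Z₁] [FiniteDimensional ℂ Z₁]
    [NormedAddCommGroup Z₂] [InnerProductSpace ℂ Z₂] [FiniteDimensional ℂ Z₂]
    (A : D₁ → D₂ → (Z₂ →ₗ[ℂ] Z₁)) (Δ : D₁ → D₂ → (X₂ →ₗ[ℂ] X₁)) : ℝ≥0∞ :=
  ⨅ (k : ℕ) (Υ : D₁ → (Z₁ →ₗ[ℂ] PiLp 2 (fun _ : Fin k => X₁)))
    (Φ : D₂ → (Z₂ →ₗ[ℂ] PiLp 2 (fun _ : Fin k => X₂)))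
    (_ : ∀ x y, A x y =
      LinearMap.adjoint (Υ x) ∘ₗ piBlock (fun _ : Fin k => Δ x y) ∘ₗ Φ y),
    (⨆ x, ENNReal.ofReal (opNorm (Υ x) ^ 2)) ⊔ (⨆ y, ENNReal.ofReal (opNorm (Φ y) ^ 2))

theorem IsUnitaryMap.norm_map {E : Type*} [NormedAddCommGroup E] [InnerProductSpace ℂ E]
    [FiniteDimensional ℂ E] {f : E →ₗ[ℂ] E} (hf : IsUnitaryMap f) (v : E) : ‖f v‖ = ‖v‖ :=
  (LinearMap.norm_map_iff_inner_map_map f).mpr (fun x y => by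
    rw [← LinearMap.adjoint_inner_right, ← LinearMap.comp_apply, hf.1, LinearMap.id_apply]) v

theorem IsUnitaryMap.adjoint {E : Type*} [NormedAddCommGroup E] [InnerProductSpace ℂ E]
    [FiniteDimensional ℂ E] {f : E →ₗ[ℂ] E} (hf : IsUnitaryMap f) :
    IsUnitaryMap (LinearMap.adjoint f) := by
  rw [IsUnitaryMap, LinearMap.adjoint_adjoint]
  exact hf.symm

section piBlock

variable {ι : Type*} [Fintype ι] {X₁ X₂ X₃ : Type*}
  [NormedAddCommGroup X₁] [InnerProductSpace ℂ X₁]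
  [NormedAddCommGroup X₂] [InnerProductSpace ℂ X₂]
  [NormedAddCommGroup X₃] [InnerProductSpace ℂ X₃]

theorem scalarMap_apply (c z : ℂ) : scalarMap c z = c * z := rfl

@[simp]
theorem piBlock_apply (Δ : ι → (X₂ →ₗ[ℂ] X₁)) (v : PiLp 2 (fun _ : ι => X₂)) (i : ι) :
    piBlock Δ v i = Δ i (v i) := rfl

theorem piBlock_comp (Δ : ι → (X₂ →ₗ[ℂ] X₁)) (Δ' : ι → (X₃ →ₗ[ℂ] X₂)) :
    piBlock Δ ∘ₗ piBlock Δ' = piBlock fun i => Δ i ∘ₗ Δ' i := rfl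

theorem piBlock_sub (Δ Δ' : ι → (X₂ →ₗ[ℂ] X₁)) :
    piBlock Δ - piBlock Δ' = piBlock (Δ - Δ') := rfl

theorem adjoint_piBlock [FiniteDimensional ℂ X₁] [FiniteDimensional ℂ X₂]
    (Δ : ι → (X₂ →ₗ[ℂ] X₁)) :
    LinearMap.adjoint (piBlock Δ) = piBlock fun i => LinearMap.adjoint (Δ i) := by
  refine ((LinearMap.eq_adjoint_iff _ _).mpr fun u v => ?_).symm
  simp only [PiLp.inner_apply, piBlock_apply, LinearMap.adjoint_inner_left]

theorem norm_piBlock_le (Δ : ι → (X₂ →ₗ[ℂ] X₁)) {c : ℝ} (hc : 0 ≤ c)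
    (hΔ : ∀ i v, ‖Δ i v‖ ≤ c * ‖v‖) (v : PiLp 2 (fun _ : ι => X₂)) :
    ‖piBlock Δ v‖ ≤ c * ‖v‖ := by
  refine le_of_sq_le_sq ?_ (by positivity)
  rw [mul_pow, PiLp.norm_sq_eq_of_L2, PiLp.norm_sq_eq_of_L2, Finset.mul_sum]
  gcongr with i
  rw [piBlock_apply, ← mul_pow]
  exact pow_le_pow_left₀ (norm_nonneg _) (hΔ i (v i)) 2

end piBlock

section opNorm

variable {E F G : Type*} [NormedAddCommGroup E] [InnerProductSpace ℂ E] [FiniteDimensional ℂ E]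
  [NormedAddCommGroup F] [InnerProductSpace ℂ F]
  [NormedAddCommGroup G] [InnerProductSpace ℂ G]

theorem opNorm_nonneg (f : E →ₗ[ℂ] F) : 0 ≤ opNorm f := norm_nonneg _

theorem norm_apply_le_opNorm (f : E →ₗ[ℂ] F) (v : E) : ‖f v‖ ≤ opNorm f * ‖v‖ :=
  (LinearMap.toContinuousLinearMap f).le_opNorm v

theorem opNorm_comp_le_of_norm_le (f : F →ₗ[ℂ] G) (g : E →ₗ[ℂ] F) {c : ℝ} (hc : 0 ≤ c)
    (hf : ∀ v, ‖f v‖ ≤ c * ‖v‖) : opNorm (f ∘ₗ g) ≤ c * opNorm g :=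
  ContinuousLinearMap.opNorm_le_bound _ (mul_nonneg hc (opNorm_nonneg g)) fun v =>
    calc ‖f (g v)‖ ≤ c * ‖g v‖ := hf _
      _ ≤ c * (opNorm g * ‖v‖) := by gcongr; exact norm_apply_le_opNorm g v
      _ = c * opNorm g * ‖v‖ := by ring

theorem opNorm_linearIsometryEquiv_comp_le (e : F ≃ₗᵢ[ℂ] G) (g : E →ₗ[ℂ] F) :
    opNorm (e.toLinearMap ∘ₗ g) ≤ opNorm g := by
  simpa using opNorm_comp_le_of_norm_le e.toLinearMap g zero_le_one (by simp)

end opNorm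

section reindex

variable {μ ν : Type*} [Fintype μ] [Fintype ν] {X₁ X₂ : Type*}
  [NormedAddCommGroup X₁] [InnerProductSpace ℂ X₁]
  [NormedAddCommGroup X₂] [InnerProductSpace ℂ X₂]

theorem piLpCongrLeft_symm_comp_piBlock_const_comp (e : μ ≃ ν) (T : X₂ →ₗ[ℂ] X₁) :
    (LinearIsometryEquiv.piLpCongrLeft 2 ℂ X₁ e).symm.toLinearMap ∘ₗ
        piBlock (fun _ : ν => T) ∘ₗ (LinearIsometryEquiv.piLpCongrLeft 2 ℂ X₂ e).toLinearMap =
      piBlock (fun _ : μ => T) := by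
  ext v i
  simp [LinearIsometryEquiv.piLpCongrLeft_apply, Equiv.piCongrLeft'_apply]

theorem piLpCurry_comp_piBlock_const_comp {κ : Type*} [Fintype κ] (T : X₂ →ₗ[ℂ] X₁) :
    (LinearIsometryEquiv.piLpCurry ℂ 2 (fun (_ : μ) (_ : κ) => X₁)).toLinearMap ∘ₗ
        piBlock (fun _ : (Σ _ : μ, κ) => T) ∘ₗ
        (LinearIsometryEquiv.piLpCurry ℂ 2 (fun (_ : μ) (_ : κ) => X₂)).symm.toLinearMap =
      piBlock (fun _ : μ => piBlock (fun _ : κ => T)) := by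
  ext v i j
  rfl

end reindex

section amplify

variable (μ : Type*) [Fintype μ] {κ : Type*} [Fintype κ] {X Y : Type*}
  [NormedAddCommGroup X] [InnerProductSpace ℂ X]
  [NormedAddCommGroup Y] [InnerProductSpace ℂ Y]

/-- The ampliation `L ⊗ id_μ`; the index set `μ × κ` of its target is realized as a sigma type. -/
def amplify (L : X →ₗ[ℂ] PiLp 2 (fun _ : κ => Y)) :
    PiLp 2 (fun _ : μ => X) →ₗ[ℂ] PiLp 2 (fun _ : (Σ _ : μ, κ) => Y) :=
  (LinearIsometryEquiv.piLpCurry ℂ 2 (fun (_ : μ) (_ : κ) => Y)).symm.toLinearMap ∘ₗ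
    piBlock (fun _ => L)

variable {μ}

theorem norm_amplify_apply_le [FiniteDimensional ℂ X] (L : X →ₗ[ℂ] PiLp 2 (fun _ : κ => Y))
    (v : PiLp 2 (fun _ : μ => X)) : ‖amplify μ L v‖ ≤ opNorm L * ‖v‖ := by
  simp only [amplify, LinearMap.comp_apply, LinearEquiv.coe_coe,
    LinearIsometryEquiv.coe_toLinearEquiv, LinearIsometryEquiv.norm_map]
  exact norm_piBlock_le _ (opNorm_nonneg L) (fun _ => norm_apply_le_opNorm L) v

theorem adjoint_amplify_comp_piBlock_comp_amplify {X' Y' : Type*}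
    [NormedAddCommGroup X'] [InnerProductSpace ℂ X'] [FiniteDimensional ℂ X']
    [NormedAddCommGroup Y'] [InnerProductSpace ℂ Y'] [FiniteDimensional ℂ Y']
    [FiniteDimensional ℂ X] [FiniteDimensional ℂ Y]
    (L : X →ₗ[ℂ] PiLp 2 (fun _ : κ => Y)) (T : Y' →ₗ[ℂ] Y)
    (R : X' →ₗ[ℂ] PiLp 2 (fun _ : κ => Y')) :
    LinearMap.adjoint (amplify μ L) ∘ₗ piBlock (fun _ => T) ∘ₗ amplify μ R =
      piBlock (fun _ : μ => LinearMap.adjoint L ∘ₗ piBlock (fun _ => T) ∘ₗ R) := by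
  rw [amplify, amplify, LinearMap.adjoint_comp, LinearIsometryEquiv.adjoint_toLinearMap_eq_symm,
    LinearIsometryEquiv.symm_symm, adjoint_piBlock, ← piBlock_comp, ← piBlock_comp,
    ← piLpCurry_comp_piBlock_const_comp]
  simp only [LinearMap.comp_assoc]

theorem ofReal_opNorm_amplify_comp_sq_le {Z : Type*} [NormedAddCommGroup Z]
    [InnerProductSpace ℂ Z] [FiniteDimensional ℂ Z] [FiniteDimensional ℂ X]
    {L : X →ₗ[ℂ] PiLp 2 (fun _ : κ => Y)} (g : Z →ₗ[ℂ] PiLp 2 (fun _ : μ => X)) {c : ℝ}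
    (hc : 0 ≤ c) (hL : opNorm L ^ 2 ≤ c) :
    ENNReal.ofReal (opNorm (amplify μ L ∘ₗ g) ^ 2) ≤
      ENNReal.ofReal c * ENNReal.ofReal (opNorm g ^ 2) := by
  rw [← ENNReal.ofReal_mul hc]
  gcongr
  calc opNorm (amplify μ L ∘ₗ g) ^ 2 ≤ (opNorm L * opNorm g) ^ 2 := by
        gcongr
        · exact opNorm_nonneg _
        · exact opNorm_comp_le_of_norm_le _ g (opNorm_nonneg L) (norm_amplify_apply_le L)
    _ ≤ c * opNorm g ^ 2 := by rw [mul_pow]; gcongr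

end amplify

section relGamma2

variable {D₁ D₂ : Type*} [Fintype D₁] [Fintype D₂] {X₁ X₂ Y₁ Y₂ Z₁ Z₂ : Type*}
  [NormedAddCommGroup X₁] [InnerProductSpace ℂ X₁] [FiniteDimensional ℂ X₁]
  [NormedAddCommGroup X₂] [InnerProductSpace ℂ X₂] [FiniteDimensional ℂ X₂]
  [NormedAddCommGroup Y₁] [InnerProductSpace ℂ Y₁] [FiniteDimensional ℂ Y₁]
  [NormedAddCommGroup Y₂] [InnerProductSpace ℂ Y₂] [FiniteDimensional ℂ Y₂]
  [NormedAddCommGroup Z₁] [InnerProductSpace ℂ Z₁] [FiniteDimensional ℂ Z₁]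
  [NormedAddCommGroup Z₂] [InnerProductSpace ℂ Z₂] [FiniteDimensional ℂ Z₂]

theorem relGamma2_le_of_factorization {μ : Type*} [Fintype μ]
    (A : D₁ → D₂ → (Z₂ →ₗ[ℂ] Z₁)) (Δ : D₁ → D₂ → (X₂ →ₗ[ℂ] X₁))
    (Υ : D₁ → (Z₁ →ₗ[ℂ] PiLp 2 (fun _ : μ => X₁)))
    (Φ : D₂ → (Z₂ →ₗ[ℂ] PiLp 2 (fun _ : μ => X₂)))
    (hA : ∀ x y, A x y = LinearMap.adjoint (Υ x) ∘ₗ piBlock (fun _ : μ => Δ x y) ∘ₗ Φ y) :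
    relGamma2 A Δ ≤
      (⨆ x, ENNReal.ofReal (opNorm (Υ x) ^ 2)) ⊔ (⨆ y, ENNReal.ofReal (opNorm (Φ y) ^ 2)) := by
  set e₁ := LinearIsometryEquiv.piLpCongrLeft 2 ℂ X₁ (Fintype.equivFin μ)
  set e₂ := LinearIsometryEquiv.piLpCongrLeft 2 ℂ X₂ (Fintype.equivFin μ)
  have hA' : ∀ x y, A x y = LinearMap.adjoint (e₁.toLinearMap ∘ₗ Υ x) ∘ₗ
      piBlock (fun _ => Δ x y) ∘ₗ e₂.toLinearMap ∘ₗ Φ y := by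
    intro x y
    rw [LinearMap.adjoint_comp, e₁.adjoint_toLinearMap_eq_symm, hA,
      ← piLpCongrLeft_symm_comp_piBlock_const_comp (Fintype.equivFin μ)]
    simp only [LinearMap.comp_assoc]
    rfl
  refine iInf_le_of_le _ (iInf_le_of_le _ (iInf_le_of_le _ (iInf_le_of_le hA' ?_)))
  gcongr with x y
  · exact opNorm_nonneg _
  · exact opNorm_linearIsometryEquiv_comp_le e₁ (Υ x)
  · exact opNorm_nonneg _
  · exact opNorm_linearIsometryEquiv_comp_le e₂ (Φ y)

theorem inv_mul_relGamma2_le_of_factorsThrough {κ : Type*} [Fintype κ]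
    (A : D₁ → D₂ → (Z₂ →ₗ[ℂ] Z₁)) (Δ : D₁ → D₂ → (X₂ →ₗ[ℂ] X₁))
    (Δ' : D₁ → D₂ → (Y₂ →ₗ[ℂ] Y₁)) (L : D₁ → (X₁ →ₗ[ℂ] PiLp 2 (fun _ : κ => Y₁)))
    (R : D₂ → (X₂ →ₗ[ℂ] PiLp 2 (fun _ : κ => Y₂))) {c : ℝ} (hc : 0 < c)
    (hΔ : ∀ x y, Δ x y = LinearMap.adjoint (L x) ∘ₗ piBlock (fun _ => Δ' x y) ∘ₗ R y)
    (hL : ∀ x, opNorm (L x) ^ 2 ≤ c) (hR : ∀ y, opNorm (R y) ^ 2 ≤ c) :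
    (ENNReal.ofReal c)⁻¹ * relGamma2 A Δ' ≤ relGamma2 A Δ := by
  refine le_iInf fun k => le_iInf fun Υ => le_iInf fun Φ => le_iInf fun hA => ?_
  rw [ENNReal.inv_mul_le_iff (by simpa using hc) ENNReal.ofReal_ne_top]
  have hA' : ∀ x y, A x y = LinearMap.adjoint (amplify (Fin k) (L x) ∘ₗ Υ x) ∘ₗ
      piBlock (fun _ => Δ' x y) ∘ₗ amplify (Fin k) (R y) ∘ₗ Φ y := by
    intro x y
    rw [hA, hΔ, LinearMap.adjoint_comp, ← adjoint_amplify_comp_piBlock_comp_amplify]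
    simp only [LinearMap.comp_assoc]
  refine (relGamma2_le_of_factorization A Δ' _ _ hA').trans (sup_le (iSup_le fun x => ?_)
    (iSup_le fun y => ?_))
  · refine (ofReal_opNorm_amplify_comp_sq_le (Υ x) hc.le (hL x)).trans ?_
    gcongr
    exact le_sup_of_le_left (le_iSup_of_le x le_rfl)
  · refine (ofReal_opNorm_amplify_comp_sq_le (Φ y) hc.le (hR y)).trans ?_
    gcongr
    exact le_sup_of_le_right (le_iSup_of_le y le_rfl)

end relGamma2

section stackMap

variable {β J ι : Type*} {E E' : Type*}
  [NormedAddCommGroup E] [InnerProductSpace ℂ E] [NormedAddCommGroup E'] [InnerProductSpace ℂ E']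

/-- The coordinate index of `ℂ^ι` joins the ampliation index, so that a block-diagonal scalar
map on `ℂ^J` can act on the stacked outputs `F b j (w j)`. -/
def stackMap [Fintype J] (F : β → J → (E →ₗ[ℂ] EuclideanSpace ℂ ι)) :
    PiLp 2 (fun _ : J => E) →ₗ[ℂ] PiLp 2 (fun _ : β × ι => PiLp 2 (fun _ : J => ℂ)) where
  toFun w := WithLp.toLp 2 fun p => WithLp.toLp 2 fun j => F p.1 j (w j) p.2
  map_add' w w' := by
    ext p j
    simp only [PiLp.add_apply, map_add]
  map_smul' c w := by
    ext p j
    simp only [PiLp.smul_apply, map_smul, RingHom.id_apply]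

@[simp]
theorem stackMap_apply [Fintype J] (F : β → J → (E →ₗ[ℂ] EuclideanSpace ℂ ι))
    (w : PiLp 2 (fun _ : J => E)) (b : β) (a : ι) (j : J) :
    stackMap F w (b, a) j = F b j (w j) a := rfl

variable [Fintype β] [Fintype J] [Fintype ι]

theorem norm_sq_stackMap (F : β → J → (E →ₗ[ℂ] EuclideanSpace ℂ ι))
    (w : PiLp 2 (fun _ : J => E)) :
    ‖stackMap F w‖ ^ 2 = ∑ b, ∑ j, ‖F b j (w j)‖ ^ 2 := by
  simp only [PiLp.norm_sq_eq_of_L2, Fintype.sum_prod_type, stackMap_apply]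
  exact Finset.sum_congr rfl fun b _ => Finset.sum_comm

theorem opNorm_stackMap_sq_le [FiniteDimensional ℂ E] (F : β → J → (E →ₗ[ℂ] EuclideanSpace ℂ ι))
    (hF : ∀ b j v, ‖F b j v‖ = ‖v‖) : opNorm (stackMap F) ^ 2 ≤ (Fintype.card β : ℝ) := by
  have hnorm : ∀ w, ‖stackMap F w‖ ≤ √(Fintype.card β) * ‖w‖ := fun w => by
    refine le_of_sq_le_sq ?_ (by positivity)
    rw [mul_pow, Real.sq_sqrt (Nat.cast_nonneg _), norm_sq_stackMap, PiLp.norm_sq_eq_of_L2]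
    simp [hF]
  calc opNorm (stackMap F) ^ 2 ≤ √(Fintype.card β : ℝ) ^ 2 := by
        gcongr
        · exact opNorm_nonneg _
        · exact ContinuousLinearMap.opNorm_le_bound _ (by positivity) hnorm
    _ = (Fintype.card β : ℝ) := Real.sq_sqrt (Nat.cast_nonneg _)

theorem adjoint_stackMap_comp_piBlock_comp_stackMap [FiniteDimensional ℂ E]
    [FiniteDimensional ℂ E'] (F : β → J → (E →ₗ[ℂ] EuclideanSpace ℂ ι))
    (G : β → J → (E' →ₗ[ℂ] EuclideanSpace ℂ ι)) (d : J → ℂ) :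
    LinearMap.adjoint (stackMap F) ∘ₗ
        piBlock (fun _ => piBlock (fun j => scalarMap (d j))) ∘ₗ stackMap G =
      piBlock (fun j => d j • ∑ b, LinearMap.adjoint (F b j) ∘ₗ G b j) := by
  refine LinearMap.ext fun w => ext_inner_left ℂ fun u => ?_
  rw [LinearMap.comp_apply, LinearMap.comp_apply, LinearMap.adjoint_inner_right]
  simp only [PiLp.inner_apply, piBlock_apply, stackMap_apply, scalarMap_apply,
    Fintype.sum_prod_type, LinearMap.smul_apply, LinearMap.sum_apply, LinearMap.comp_apply,
    inner_smul_right, inner_sum, LinearMap.adjoint_inner_right, RCLike.inner_apply,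
    Finset.mul_sum, mul_assoc]
  conv_rhs => rw [Finset.sum_comm]
  exact Finset.sum_congr rfl fun b _ => Finset.sum_comm

theorem piBlock_sub_piBlock_eq_adjoint_stackMap_comp
    (O O' : J → (EuclideanSpace ℂ ι →ₗ[ℂ] EuclideanSpace ℂ ι)) (p : J → Prop) [DecidablePred p]
    (hp : ∀ j, p j → O j = O' j) :
    piBlock O - piBlock O' =
      LinearMap.adjoint (stackMap ![fun j => LinearMap.adjoint (O j), fun _ => LinearMap.id]) ∘ₗ
        piBlock (fun _ => piBlock (fun j => scalarMap (if p j then 0 else 1))) ∘ₗ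
          stackMap ![fun _ => LinearMap.id, fun j => -O' j] := by
  rw [adjoint_stackMap_comp_piBlock_comp_stackMap, piBlock_sub]
  congr 1
  funext j
  by_cases hj : p j
  · simp [hj, hp j hj]
  · simp [hj, Fin.sum_univ_two, sub_eq_add_neg]

end stackMap

theorem statement15_general (q n : ℕ) (D : Finset (Fin n → Fin q)) {Z : Type}
    [NormedAddCommGroup Z] [InnerProductSpace ℂ Z]
    (O : {s // s ∈ D} → Fin n →
      (EuclideanSpace ℂ (Fin (q + 1)) →ₗ[ℂ] EuclideanSpace ℂ (Fin (q + 1))))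
    (hO : ∀ x j, IsUnitaryMap (O x j))
    (hdep : ∀ x y j, x.1 j = y.1 j → O x j = O y j)
    (ρ σ : {s // s ∈ D} → Z) :
    (1 / 2 : ℝ≥0∞) *
        relGamma2
          (fun x y => scalarMap ((inner ℂ (ρ x) (ρ y) : ℂ) - (inner ℂ (σ x) (σ y) : ℂ)))
          (fun x y => piBlock (fun j => scalarMap (if x.1 j = y.1 j then 0 else 1))) ≤
      relGamma2
        (fun x y => scalarMap ((inner ℂ (ρ x) (ρ y) : ℂ) - (inner ℂ (σ x) (σ y) : ℂ)))
        (fun x y => piBlock (O x) - piBlock (O y)) := by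
  have hL : ∀ x, opNorm (stackMap (ι := Fin (q + 1))
      ![fun j => LinearMap.adjoint (O x j), fun _ => LinearMap.id]) ^ 2 ≤ 2 := fun x => by
    refine (opNorm_stackMap_sq_le _ ?_).trans (by norm_num)
    refine Fin.forall_fin_two.mpr ⟨fun j => ?_, fun j v => ?_⟩
    · exact (hO x j).adjoint.norm_map
    · simp
  have hR : ∀ y, opNorm (stackMap (ι := Fin (q + 1))
      ![fun _ => LinearMap.id, fun j => -O y j]) ^ 2 ≤ 2 := fun y => by
    refine (opNorm_stackMap_sq_le _ ?_).trans (by norm_num)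
    refine Fin.forall_fin_two.mpr ⟨fun j v => ?_, fun j v => ?_⟩
    · simp
    · simp [(hO y j).norm_map]
  simpa using inv_mul_relGamma2_le_of_factorsThrough _ _ _ _ _ two_pos
    (fun x y => piBlock_sub_piBlock_eq_adjoint_stackMap_comp (O x) (O y) _ (hdep x y)) hL hR

/-- Lower bound for state conversion with standard oracles: for a set
`D` of strings over the alphabet `{1,…,q}` (realized as `Fin q`) of length `n`, standard
block-diagonal oracles `O_x = ⊕_j O_{x,j}` on `ℂⁿ ⊗ ℂ^{q+1}` with `O_{x,j} e₀ = e_{x_j}`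
and `O_{x,j}` depending only on `x_j`, we have
`γ₂(⟨ρ_x,ρ_y⟩ − ⟨σ_x,σ_y⟩ | O_x − O_y) ≥
 (1/2) γ₂(⟨ρ_x,ρ_y⟩ − ⟨σ_x,σ_y⟩ | ⊕_j 1_{x_j ≠ y_j})`. -/
theorem statement15 (q n : ℕ) (D : Finset (Fin n → Fin q)) {Z : Type}
    [NormedAddCommGroup Z] [InnerProductSpace ℂ Z] [FiniteDimensional ℂ Z]
    (O : {s // s ∈ D} → Fin n →
      (EuclideanSpace ℂ (Fin (q + 1)) →ₗ[ℂ] EuclideanSpace ℂ (Fin (q + 1))))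
    (hO : ∀ x j, IsUnitaryMap (O x j))
    (hgen : ∀ x j, O x j (EuclideanSpace.single 0 1) =
      EuclideanSpace.single (Fin.succ (x.1 j)) 1)
    (hdep : ∀ x y j, x.1 j = y.1 j → O x j = O y j)
    (ρ σ : {s // s ∈ D} → Z) (hρ : ∀ x, ‖ρ x‖ = 1) (hσ : ∀ x, ‖σ x‖ = 1) :
    (1 / 2 : ℝ≥0∞) *
        relGamma2
          (fun x y => scalarMap ((inner ℂ (ρ x) (ρ y) : ℂ) - (inner ℂ (σ x) (σ y) : ℂ)))
          (fun x y => piBlock (fun j => scalarMap (if x.1 j = y.1 j then 0 else 1))) ≤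
      relGamma2
        (fun x y => scalarMap ((inner ℂ (ρ x) (ρ y) : ℂ) - (inner ℂ (σ x) (σ y) : ℂ)))
        (fun x y => piBlock (O x) - piBlock (O y)) :=
  statement15_general q n D O hO hdep ρ σ
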